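/- Let Γ, Λ be finite dimensional algebras and X a Γ-Λ-bimodule that is projective as a left Γ-module and has finite projective dimension as a right Λ-module. If P^• is an exact (acyclic) complex of projective left Λ-modules, then the complex X ⊗_Λ P^• is exact, and each term X ⊗_Λ P^i is a projective left Γ-module. -/

import Mathlib

/-!
Projective right modules are retracts of free ones, and `(ι →₀ Λᵐᵒᵖ) ⊗_Λ N ≅ ι →₀ N`, so
tensoring with a projective right module preserves exactness; dually, tensoring with a projective
left module preserves injectivity. The general case is by induction on the projective dimension
of `X`: choose `0 → K → Q → X → 0` with `Q` projective and `pd K < pd X`. A cycle of `X ⊗ P⬝`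
lifts to `Q ⊗ P⬝`; its boundary comes from `K ⊗ P⬝` one degree up, where it is a cycle because
`K ⊗ P → Q ⊗ P` is injective on projective `P`, hence a boundary by induction. Correcting the
lift by it gives a cycle of the exact complex `Q ⊗ P⬝`, whose preimage maps to a preimage of the
original cycle. Finally `X ⊗_Λ P` is a retract of `X ⊗_Λ Λ^(P) ≅ X^(P)`, a projective
`Γ`-module.
-/

noncomputable section

open scoped TensorProduct
open MulOpposite

section BTensorCore

variable (B : Type) [Ring B]

/-- The balancing relations for the tensor product over `B` of a right `B`-module `M`
and a left `B`-module `N`. -/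
def BTrel (M N : Type) [AddCommGroup M] [AddCommGroup N] [Module Bᵐᵒᵖ M] [Module B N] :
    Submodule ℤ (TensorProduct ℤ M N) :=
  Submodule.span ℤ {x | ∃ (m : M) (b : B) (n : N),
    x = (op b • m) ⊗ₜ[ℤ] n - m ⊗ₜ[ℤ] (b • n)}

/-- The balanced tensor product `M ⊗_B N` of a right `B`-module `M` and a left `B`-module `N`,
realized as a quotient of the tensor product of abelian groups. -/
def BTensor (M N : Type) [AddCommGroup M] [AddCommGroup N] [Module Bᵐᵒᵖ M] [Module B N] : Type :=
  TensorProduct ℤ M N ⧸ BTrel B M N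

instance (M N : Type) [AddCommGroup M] [AddCommGroup N] [Module Bᵐᵒᵖ M] [Module B N] :
    AddCommGroup (BTensor B M N) :=
  inferInstanceAs (AddCommGroup (TensorProduct ℤ M N ⧸ BTrel B M N))

variable {M N : Type} [AddCommGroup M] [AddCommGroup N] [Module Bᵐᵒᵖ M] [Module B N]

/-- The class of `m ⊗ n` in `M ⊗_B N`. -/
def BTensor.tmul (m : M) (n : N) : BTensor B M N :=
  Submodule.Quotient.mk (m ⊗ₜ[ℤ] n)

/-- Functoriality of `M ⊗_B -` in the second (left-module) variable. -/
def BTensor.map₂ (Mfix : Type) [AddCommGroup Mfix] [Module Bᵐᵒᵖ Mfix]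
    {N' : Type} [AddCommGroup N'] [Module B N'] (f : N →ₗ[B] N') :
    BTensor B Mfix N →ₗ[ℤ] BTensor B Mfix N' :=
  Submodule.mapQ _ _ (TensorProduct.map LinearMap.id f.toAddMonoidHom.toIntLinearMap) (by
    rw [BTrel, Submodule.span_le]
    rintro x ⟨m, b, n, rfl⟩
    simp only [SetLike.mem_coe, Submodule.mem_comap, map_sub, TensorProduct.map_tmul,
      LinearMap.id_coe, id_eq, AddMonoidHom.coe_toIntLinearMap, LinearMap.toAddMonoidHom_coe]
    show (op b • m) ⊗ₜ[ℤ] f n - m ⊗ₜ[ℤ] f (b • n) ∈ BTrel B Mfix N'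
    rw [map_smul]
    exact Submodule.subset_span ⟨m, b, f n, rfl⟩)

/-- Functoriality of `- ⊗_B N` in the first (right-module) variable. -/
def BTensor.map₁ (Nfix : Type) [AddCommGroup Nfix] [Module B Nfix]
    {M' : Type} [AddCommGroup M'] [Module Bᵐᵒᵖ M'] (g : M →ₗ[Bᵐᵒᵖ] M') :
    BTensor B M Nfix →ₗ[ℤ] BTensor B M' Nfix :=
  Submodule.mapQ _ _ (TensorProduct.map g.toAddMonoidHom.toIntLinearMap LinearMap.id) (by
    rw [BTrel, Submodule.span_le]
    rintro x ⟨m, b, n, rfl⟩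
    simp only [SetLike.mem_coe, Submodule.mem_comap, map_sub, TensorProduct.map_tmul,
      LinearMap.id_coe, id_eq, AddMonoidHom.coe_toIntLinearMap, LinearMap.toAddMonoidHom_coe]
    show TensorProduct.map g.toAddMonoidHom.toIntLinearMap LinearMap.id
      ((op b • m) ⊗ₜ[ℤ] n - m ⊗ₜ[ℤ] (b • n)) ∈ BTrel B M' Nfix
    rw [map_sub, TensorProduct.map_tmul, TensorProduct.map_tmul]
    show g (op b • m) ⊗ₜ[ℤ] n - g m ⊗ₜ[ℤ] (b • n) ∈ BTrel B M' Nfix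
    rw [map_smul]
    exact Submodule.subset_span ⟨g m, b, n, rfl⟩)

theorem BTensor.map₂_mk (Mfix : Type) [AddCommGroup Mfix] [Module Bᵐᵒᵖ Mfix]
    {N' : Type} [AddCommGroup N'] [Module B N'] (f : N →ₗ[B] N') (y : Mfix ⊗[ℤ] N) :
    BTensor.map₂ B Mfix f (Submodule.Quotient.mk y) =
      Submodule.Quotient.mk
        (TensorProduct.map LinearMap.id f.toAddMonoidHom.toIntLinearMap y) :=
  by rfl

theorem BTensor.map₁_mk (Nfix : Type) [AddCommGroup Nfix] [Module B Nfix]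
    {M' : Type} [AddCommGroup M'] [Module Bᵐᵒᵖ M'] (g : M →ₗ[Bᵐᵒᵖ] M') (y : M ⊗[ℤ] Nfix) :
    BTensor.map₁ B Nfix g (Submodule.Quotient.mk y) =
      Submodule.Quotient.mk
        (TensorProduct.map g.toAddMonoidHom.toIntLinearMap LinearMap.id y) :=
  by rfl

end BTensorCore

section LeftRight

variable (B : Type) [Ring B] (Γ : Type) [Ring Γ]
variable (M N : Type) [AddCommGroup M] [AddCommGroup N] [Module Bᵐᵒᵖ M] [Module B N]

section Left
variable [Module Γ M] [SMulCommClass Γ Bᵐᵒᵖ M]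

/-- left scalar multiplication on `M`, as a right-`B`-linear map. -/
def lsmulRightLinear (g : Γ) : M →ₗ[Bᵐᵒᵖ] M where
  toFun := (g • ·)
  map_add' := smul_add g
  map_smul' := fun b m => by exact smul_comm g b m

instance BTensor.instSMulLeft : SMul Γ (BTensor B M N) :=
  ⟨fun g => BTensor.map₁ B N (lsmulRightLinear B Γ M g)⟩

instance BTensor.leftModule : Module Γ (BTensor B M N) := by
  refine Function.Surjective.module Γ
    (⟨⟨(Submodule.Quotient.mk : TensorProduct ℤ M N → BTensor B M N), rfl⟩, fun x y => rfl⟩)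
    (Submodule.Quotient.mk_surjective _) ?_
  intro g y
  show Submodule.Quotient.mk (g • y) = BTensor.map₁ B N (lsmulRightLinear B Γ M g)
    (Submodule.Quotient.mk y)
  rw [BTensor.map₁_mk]
  congr 1

end Left

section Right
variable [Module Γᵐᵒᵖ N] [SMulCommClass B Γᵐᵒᵖ N]

/-- right scalar multiplication on `N`, as a left-`B`-linear map. -/
def rsmulLeftLinear (g : Γᵐᵒᵖ) : N →ₗ[B] N where
  toFun := (g • ·)
  map_add' := smul_add g
  map_smul' := fun b n => by exact (smul_comm b g n).symm

instance BTensor.instSMulRight : SMul Γᵐᵒᵖ (BTensor B M N) :=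
  ⟨fun g => BTensor.map₂ B M (rsmulLeftLinear B Γ N g)⟩

instance BTensor.rightModule : Module Γᵐᵒᵖ (BTensor B M N) := by
  refine Function.Surjective.module Γᵐᵒᵖ
    (⟨⟨fun (y : N ⊗[ℤ] M) => (Submodule.Quotient.mk (TensorProduct.comm ℤ N M y) :
        BTensor B M N), by simp; rfl⟩, fun x y => by simp; rfl⟩) ?_ ?_
  · intro x
    obtain ⟨y, rfl⟩ := Submodule.Quotient.mk_surjective _ x
    exact ⟨(TensorProduct.comm ℤ N M).symm y, by
      show Submodule.Quotient.mk (TensorProduct.comm ℤ N M ((TensorProduct.comm ℤ N M).symm y)) = _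
      rw [LinearEquiv.apply_symm_apply]⟩
  · intro g y
    show Submodule.Quotient.mk ((TensorProduct.comm ℤ N M) (g • y)) =
      BTensor.map₂ B M (rsmulLeftLinear B Γ N g)
        (Submodule.Quotient.mk ((TensorProduct.comm ℤ N M) y))
    rw [BTensor.map₂_mk]
    congr 1
    induction y using TensorProduct.induction_on with
    | zero => simp
    | tmul n m =>
        simp [TensorProduct.smul_tmul', rsmulLeftLinear, TensorProduct.comm_tmul]
    | add x y hx hy => simp [smul_add, hx, hy]

end Right

instance BTensor.smulCommClass [Module Γ M] [SMulCommClass Γ Bᵐᵒᵖ M]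
    [Module Γᵐᵒᵖ N] [SMulCommClass B Γᵐᵒᵖ N] :
    SMulCommClass Γ Γᵐᵒᵖ (BTensor B M N) := by
  constructor
  intro g og x
  obtain ⟨y, rfl⟩ := Submodule.Quotient.mk_surjective _ x
  show (BTensor.map₁ B N (lsmulRightLinear B Γ M g)) ((BTensor.map₂ B M (rsmulLeftLinear B Γ N og)) _)
    = (BTensor.map₂ B M (rsmulLeftLinear B Γ N og)) ((BTensor.map₁ B N (lsmulRightLinear B Γ M g)) _)
  rw [BTensor.map₂_mk, BTensor.map₁_mk, BTensor.map₁_mk, BTensor.map₂_mk]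
  congr 1
  induction y using TensorProduct.induction_on with
  | zero => simp
  | tmul m n => simp [lsmulRightLinear, rsmulLeftLinear]
  | add x y hx hy => simp [hx, hy]

end LeftRight

section Bimod

variable (B : Type) [Ring B]

/-- A `B`-`B`-bimodule, packaged. -/
structure BBimod : Type 1 where
  X : Type
  [addcg : AddCommGroup X]
  [left : Module B X]
  [right : Module Bᵐᵒᵖ X]
  [comm : SMulCommClass B Bᵐᵒᵖ X]

attribute [instance] BBimod.addcg BBimod.left BBimod.right BBimod.comm

variable {B}

/-- tensor product of bimodules over `B`. -/
def BBimod.tensor (M N : BBimod B) : BBimod B where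
  X := BTensor B M.X N.X

/-- `M.pow j` is the tensor power `M^{⊗_B (j+1)}`. -/
def BBimod.pow (M : BBimod B) : ℕ → BBimod B
  | 0 => M
  | (j + 1) => M.tensor (M.pow j)

end Bimod

section Tor

variable (R : Type) [Ring R]

/-- `P`, `d`, `ε` form a projective resolution of the left `R`-module `N`. -/
def IsProjResolution (N : Type) [AddCommGroup N] [Module R N]
    (P : ℕ → ModuleCat R) (d : ∀ i, P (i + 1) ⟶ P i) (ε : P 0 ⟶ ModuleCat.of R N) : Prop :=
  (∀ i, Module.Projective R (P i)) ∧ Function.Surjective ε ∧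
    LinearMap.range (d 0).hom = LinearMap.ker ε.hom ∧
    ∀ i, LinearMap.range (d (i + 1)).hom = LinearMap.ker (d i).hom

/-- `Tor_i^R(M, N) = 0` for all `i ≥ 1`: for every projective resolution `P⬝` of `N`, the
complex `M ⊗_R P⬝` is exact in all positive degrees. -/
def TorVanishesPos (M : Type) [AddCommGroup M] [Module Rᵐᵒᵖ M]
    (N : Type) [AddCommGroup N] [Module R N] : Prop :=
  ∀ (P : ℕ → ModuleCat R) (d : ∀ i, P (i + 1) ⟶ P i) (ε : P 0 ⟶ ModuleCat.of R N),
    IsProjResolution R N P d ε →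
    ∀ i, LinearMap.range (BTensor.map₂ R M (d (i + 1)).hom) =
      LinearMap.ker (BTensor.map₂ R M (d i).hom)

end Tor

section ExtGp

variable (R : Type) [Ring R]

/-- `Ext_R^{i+1}(U, Y) = 0`: for every projective resolution of `U`, the induced complex of
`Hom` groups is exact at the spot computing `Ext^{i+1}`. -/
def ExtVanishSucc (U : Type) [AddCommGroup U] [Module R U]
    (Y : Type) [AddCommGroup Y] [Module R Y] (i : ℕ) : Prop :=
  ∀ (P : ℕ → ModuleCat R) (d : ∀ n, P (n + 1) ⟶ P n) (ε : P 0 ⟶ ModuleCat.of R U),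
    IsProjResolution R U P d ε →
    ∀ g : P (i + 1) →ₗ[R] Y, g.comp (d (i + 1)).hom = 0 →
      ∃ h : P i →ₗ[R] Y, h.comp (d i).hom = g

/-- `U` is a Gorenstein projective `R`-module: it is (isomorphic to) a cycle module of a
complete projective resolution, i.e. an exact complex of projectives which stays exact
under `Hom_R(-, R)`. -/
def IsGorensteinProj (U : Type) [AddCommGroup U] [Module R U] : Prop :=
  ∃ (P : ℤ → ModuleCat.{0} R) (d : ∀ i, P i ⟶ P (i + 1)),
    (∀ i, Module.Projective R (P i)) ∧
    (∀ i, LinearMap.range (d i).hom = LinearMap.ker (d (i + 1)).hom) ∧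
    (∀ (i : ℤ) (g : P (i + 1) →ₗ[R] R), g.comp (d i).hom = 0 ↔
      ∃ h : P (i + 1 + 1) →ₗ[R] R, h.comp (d (i + 1)).hom = g) ∧
    Nonempty (U ≃ₗ[R] LinearMap.ker (d 0).hom)

/-- `Y ∈ Gproj(R)^⊥`: `Ext_R^i(U, Y) = 0` for every finitely generated Gorenstein
projective `U` and every `i ≥ 1`. -/
def MemGprojPerp (Y : Type) [AddCommGroup Y] [Module R Y] : Prop :=
  ∀ (U : Type) [AddCommGroup U] [Module R U], Module.Finite R U → IsGorensteinProj R U →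
    ∀ i : ℕ, ExtVanishSucc R U Y i

/-- `X ∈ ^⊥R`: `Ext_R^i(X, R) = 0` for all `i ≥ 1`. -/
def MemPerpRing (X : Type) [AddCommGroup X] [Module R X] : Prop :=
  ∀ i : ℕ, ExtVanishSucc R X R i

/-- projective dimension at most `n`. -/
def pdLE : ℕ → ModuleCat R → Prop
  | 0, M => Module.Projective R M
  | (n + 1), M => ∃ (P : ModuleCat R) (f : P ⟶ M),
      Module.Projective R P ∧ Function.Surjective f ∧ pdLE n (ModuleCat.of R (LinearMap.ker f.hom))

/-- `M` has finite projective dimension over `R`. -/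
def HasFinProjDim (M : Type) [AddCommGroup M] [Module R M] : Prop :=
  ∃ n, pdLE R n (ModuleCat.of R M)

end ExtGp

open Function

theorem Function.Exact.finsupp_mapRange {ι N N' N'' : Type*} [AddCommGroup N] [AddCommGroup N']
    [AddCommGroup N''] {f : N →+ N'} {g : N' →+ N''} (h : Exact f g) :
    Exact (Finsupp.mapRange.addMonoidHom (ι := ι) f) (Finsupp.mapRange.addMonoidHom g) := by
  refine AddMonoidHom.exact_of_comp_of_mem_range ?_ fun u hu => ?_
  · ext i n
    simp [h.apply_apply_eq_zero]
  · show u ∈ (Finsupp.mapRange.addMonoidHom f).range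
    rw [← u.sum_single]
    refine sum_mem fun i _ => ?_
    obtain ⟨n, hn⟩ := (h (u i)).1 (by simpa using DFunLike.congr_fun hu i)
    exact ⟨Finsupp.single i n, by simp [hn]⟩

namespace BTensor

variable {B : Type} [Ring B]
variable {M M' M'' Q : Type} [AddCommGroup M] [AddCommGroup M'] [AddCommGroup M'']
  [AddCommGroup Q] [Module Bᵐᵒᵖ M] [Module Bᵐᵒᵖ M'] [Module Bᵐᵒᵖ M''] [Module Bᵐᵒᵖ Q]
variable {N N' N'' : Type} [AddCommGroup N] [AddCommGroup N'] [AddCommGroup N'']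
  [Module B N] [Module B N'] [Module B N'']

@[elab_as_elim]
theorem induction_on {motive : BTensor B M N → Prop} (x : BTensor B M N) (zero : motive 0)
    (tmul : ∀ m n, motive (tmul B m n)) (add : ∀ x y, motive x → motive y → motive (x + y)) :
    motive x := by
  obtain ⟨y, rfl⟩ := Submodule.Quotient.mk_surjective _ x
  induction y using TensorProduct.induction_on with
  | zero => exact zero
  | tmul m n => exact tmul m n
  | add y y' hy hy' => exact add _ _ hy hy'

theorem hom_ext {A : Type} [AddCommGroup A] {φ ψ : BTensor B M N →ₗ[ℤ] A}
    (h : ∀ m n, φ (tmul B m n) = ψ (tmul B m n)) : φ = ψ :=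
  Submodule.linearMap_qext _ (TensorProduct.ext' h)

theorem tmul_smul (m : M) (b : B) (n : N) : tmul B m (b • n) = tmul B (op b • m) n := by
  have hrel : (op b • m) ⊗ₜ[ℤ] n - m ⊗ₜ[ℤ] (b • n) ∈ BTrel B M N :=
    Submodule.subset_span ⟨m, b, n, rfl⟩
  exact ((Submodule.Quotient.eq _).2 hrel).symm

theorem zero_tmul (n : N) : tmul B (0 : M) n = 0 := by
  rw [tmul, TensorProduct.zero_tmul]; rfl

theorem tmul_zero (m : M) : tmul B m (0 : N) = 0 := by
  rw [tmul, TensorProduct.tmul_zero]; rfl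

theorem add_tmul (m m' : M) (n : N) : tmul B (m + m') n = tmul B m n + tmul B m' n := by
  rw [tmul, TensorProduct.add_tmul]; rfl

theorem tmul_add (m : M) (n n' : N) : tmul B m (n + n') = tmul B m n + tmul B m n' := by
  rw [tmul, TensorProduct.tmul_add]; rfl

variable (B M N) in
def mk : M →+ N →+ BTensor B M N :=
  AddMonoidHom.mk' (fun m => AddMonoidHom.mk' (tmul B m) (tmul_add m))
    fun m m' => AddMonoidHom.ext (add_tmul m m')

@[simp]
theorem mk_apply (m : M) (n : N) : mk B M N m n = tmul B m n := rfl

def lift {A : Type} [AddCommGroup A] (φ : M →+ N →+ A)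
    (hφ : ∀ m (b : B) n, φ (op b • m) n = φ m (b • n)) : BTensor B M N →ₗ[ℤ] A :=
  have hℤ : ∀ (z : ℤ) m n, φ (z • m) n = φ m (z • n) := fun z m n => by simp
  Submodule.liftQ _ (TensorProduct.liftAddHom φ hℤ).toIntLinearMap <|
    Submodule.span_le.2 <| by
      rintro _ ⟨m, b, n, rfl⟩
      change TensorProduct.liftAddHom φ hℤ ((op b • m) ⊗ₜ n - m ⊗ₜ (b • n)) = 0
      rw [map_sub, TensorProduct.liftAddHom_tmul, TensorProduct.liftAddHom_tmul, hφ, sub_self]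

theorem map₂_tmul (f : N →ₗ[B] N') (m : M) (n : N) :
    map₂ B M f (tmul B m n) = tmul B m (f n) := rfl

theorem map₁_tmul (g : M →ₗ[Bᵐᵒᵖ] M') (m : M) (n : N) :
    map₁ B N g (tmul B m n) = tmul B (g m) n := rfl

theorem map₂_comp (f : N →ₗ[B] N') (f' : N' →ₗ[B] N'') :
    map₂ B M (f'.comp f) = (map₂ B M f').comp (map₂ B M f) :=
  hom_ext fun _ _ => rfl

theorem map₁_comp (g : M →ₗ[Bᵐᵒᵖ] M') (g' : M' →ₗ[Bᵐᵒᵖ] M'') :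
    map₁ B N (g'.comp g) = (map₁ B N g').comp (map₁ B N g) :=
  hom_ext fun _ _ => rfl

theorem map₂_id : map₂ B M (LinearMap.id : N →ₗ[B] N) = LinearMap.id :=
  hom_ext fun _ _ => rfl

theorem map₁_id : map₁ B N (LinearMap.id : M →ₗ[Bᵐᵒᵖ] M) = LinearMap.id :=
  hom_ext fun _ _ => rfl

theorem map₂_zero : map₂ B M (0 : N →ₗ[B] N') = 0 :=
  hom_ext fun m _ => tmul_zero m

theorem map₁_zero : map₁ B N (0 : M →ₗ[Bᵐᵒᵖ] M') = 0 :=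
  hom_ext fun _ n => zero_tmul n

theorem map₂_map₁ (f : N →ₗ[B] N') (g : M →ₗ[Bᵐᵒᵖ] M') (x : BTensor B M N) :
    map₂ B M' f (map₁ B N g x) = map₁ B N' g (map₂ B M f x) :=
  LinearMap.congr_fun (hom_ext (φ := (map₂ B M' f).comp (map₁ B N g))
    (ψ := (map₁ B N' g).comp (map₂ B M f)) fun _ _ => rfl) x

theorem map₂_map₂_eq_zero {f : N →ₗ[B] N'} {f' : N' →ₗ[B] N''} (h : f'.comp f = 0)
    (x : BTensor B M N) : map₂ B M f' (map₂ B M f x) = 0 := by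
  rw [← LinearMap.comp_apply, ← map₂_comp, h, map₂_zero, LinearMap.zero_apply]

theorem map₁_map₁_eq_zero {g : M →ₗ[Bᵐᵒᵖ] M'} {g' : M' →ₗ[Bᵐᵒᵖ] M''} (h : g'.comp g = 0)
    (x : BTensor B M N) : map₁ B N g' (map₁ B N g x) = 0 := by
  rw [← LinearMap.comp_apply, ← map₁_comp, h, map₁_zero, LinearMap.zero_apply]

theorem map₁_surjective {g : M →ₗ[Bᵐᵒᵖ] M'} (hg : Surjective g) : Surjective (map₁ B N g) := by
  rintro ⟨y⟩
  obtain ⟨x, rfl⟩ := TensorProduct.map_surjective (g := g.toAddMonoidHom.toIntLinearMap)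
    (g' := (LinearMap.id : N →ₗ[ℤ] N)) hg (fun n => ⟨n, rfl⟩) y
  exact ⟨Submodule.Quotient.mk x, rfl⟩

section Free

variable (ι : Type)

def finsuppScalarLeftHom : BTensor B (ι →₀ Bᵐᵒᵖ) N →ₗ[ℤ] (ι →₀ N) :=
  lift
    (AddMonoidHom.mk' (fun t => AddMonoidHom.mk'
      (fun n => t.mapRange (fun ρ => ρ.unop • n) (zero_smul B n)) fun _ _ => by ext; simp)
      fun _ _ => by ext; simp [add_smul])
    fun t b n => by ext; simp [mul_smul]

theorem finsuppScalarLeftHom_tmul (t : ι →₀ Bᵐᵒᵖ) (n : N) :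
    finsuppScalarLeftHom ι (tmul B t n) = t.mapRange (fun ρ => ρ.unop • n) (zero_smul B n) :=
  rfl

def finsuppScalarLeft : BTensor B (ι →₀ Bᵐᵒᵖ) N ≃+ (ι →₀ N) where
  toFun := finsuppScalarLeftHom ι
  invFun := Finsupp.liftAddHom fun i => mk B _ N (Finsupp.single i 1)
  left_inv x := by
    induction x using induction_on with
    | zero => simp
    | tmul t n =>
      induction t using Finsupp.induction_linear with
      | zero => simp [zero_tmul]
      | add t t' ht ht' => rw [add_tmul, map_add, map_add, ht, ht']
      | single i ρ =>
        rw [finsuppScalarLeftHom_tmul, Finsupp.mapRange_single, Finsupp.liftAddHom_apply_single,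
          mk_apply, tmul_smul, Finsupp.smul_single, smul_eq_mul, mul_one, op_unop]
    | add x y hx hy => rw [map_add, map_add, hx, hy]
  right_inv h := by
    induction h using Finsupp.induction_linear with
    | zero => simp
    | add h h' hh hh' => rw [map_add, map_add, hh, hh']
    | single i n =>
      rw [Finsupp.liftAddHom_apply_single, mk_apply, finsuppScalarLeftHom_tmul,
        Finsupp.mapRange_single, unop_one, one_smul]
  map_add' := map_add _

theorem finsuppScalarLeft_map₂ (f : N →ₗ[B] N') (x : BTensor B (ι →₀ Bᵐᵒᵖ) N) :
    finsuppScalarLeft ι (map₂ B _ f x) = (finsuppScalarLeft ι x).mapRange f f.map_zero := by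
  induction x using induction_on with
  | zero => simp
  | tmul t n => ext i; simp [finsuppScalarLeft, finsuppScalarLeftHom_tmul, map₂_tmul]
  | add x y hx hy => rw [map_add, map_add, hx, hy, map_add, Finsupp.mapRange_add f.map_add]

def finsuppScalarRightHom : BTensor B M (ι →₀ B) →ₗ[ℤ] (ι →₀ M) :=
  lift
    (AddMonoidHom.mk' (fun m => AddMonoidHom.mk'
      (fun t => t.mapRange (fun b => op b • m) (by simp)) fun _ _ => by ext; simp [add_smul])
      fun _ _ => by ext; simp)
    fun m b t => by ext; simp [mul_smul]

theorem finsuppScalarRightHom_tmul (m : M) (t : ι →₀ B) :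
    finsuppScalarRightHom ι (tmul B m t) = t.mapRange (fun b => op b • m) (by simp) :=
  rfl

def finsuppScalarRight : BTensor B M (ι →₀ B) ≃+ (ι →₀ M) where
  toFun := finsuppScalarRightHom ι
  invFun := Finsupp.liftAddHom fun i => (mk B M _).flip (Finsupp.single i 1)
  left_inv x := by
    induction x using induction_on with
    | zero => simp
    | tmul m t =>
      induction t using Finsupp.induction_linear with
      | zero => simp [tmul_zero]
      | add t t' ht ht' => rw [tmul_add, map_add, map_add, ht, ht']
      | single i b =>
        rw [finsuppScalarRightHom_tmul, Finsupp.mapRange_single, Finsupp.liftAddHom_apply_single,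
          AddMonoidHom.flip_apply, mk_apply, ← tmul_smul, Finsupp.smul_single, smul_eq_mul,
          mul_one]
    | add x y hx hy => rw [map_add, map_add, hx, hy]
  right_inv h := by
    induction h using Finsupp.induction_linear with
    | zero => simp
    | add h h' hh hh' => rw [map_add, map_add, hh, hh']
    | single i m =>
      rw [Finsupp.liftAddHom_apply_single, AddMonoidHom.flip_apply, mk_apply,
        finsuppScalarRightHom_tmul, Finsupp.mapRange_single, op_one, one_smul]
  map_add' := map_add _

theorem finsuppScalarRight_map₁ (g : M →ₗ[Bᵐᵒᵖ] M') (x : BTensor B M (ι →₀ B)) :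
    finsuppScalarRight ι (map₁ B _ g x) = (finsuppScalarRight ι x).mapRange g g.map_zero := by
  induction x using induction_on with
  | zero => simp
  | tmul m t => ext i; simp [finsuppScalarRight, finsuppScalarRightHom_tmul, map₁_tmul]
  | add x y hx hy => rw [map_add, map_add, hx, hy, map_add, Finsupp.mapRange_add g.map_add]

theorem exact_map₂_finsupp {f : N →ₗ[B] N'} {g : N' →ₗ[B] N''} (h : Exact f g) :
    Exact (map₂ B (ι →₀ Bᵐᵒᵖ) f) (map₂ B (ι →₀ Bᵐᵒᵖ) g) :=
  Exact.of_ladder_addEquiv_of_exact' (finsuppScalarLeft ι) (finsuppScalarLeft ι)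
    (finsuppScalarLeft ι) (f₁₂ := (map₂ B _ f).toAddMonoidHom)
    (f₂₃ := (map₂ B _ g).toAddMonoidHom) (g₁₂ := Finsupp.mapRange.addMonoidHom f.toAddMonoidHom)
    (g₂₃ := Finsupp.mapRange.addMonoidHom g.toAddMonoidHom)
    (AddMonoidHom.ext (finsuppScalarLeft_map₂ ι f)).symm
    (AddMonoidHom.ext (finsuppScalarLeft_map₂ ι g)).symm h.finsupp_mapRange

theorem map₁_injective_finsupp {g : M →ₗ[Bᵐᵒᵖ] M'} (hg : Injective g) :
    Injective (map₁ B (ι →₀ B) g) := fun x y hxy =>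
  (finsuppScalarRight ι).injective <| Finsupp.mapRange_injective g g.map_zero hg <| by
    rw [← finsuppScalarRight_map₁, ← finsuppScalarRight_map₁, hxy]

end Free

theorem exact_map₂_of_projective (hM : Module.Projective Bᵐᵒᵖ M) {f : N →ₗ[B] N'}
    {g : N' →ₗ[B] N''} (h : Exact f g) : Exact (map₂ B M f) (map₂ B M g) := by
  obtain ⟨s, hs⟩ := Module.projective_def'.mp hM
  have hretract (x : BTensor B M N') :
      map₁ B N' (Finsupp.linearCombination Bᵐᵒᵖ id) (map₁ B N' s x) = x := by
    rw [← LinearMap.comp_apply, ← map₁_comp, hs, map₁_id, LinearMap.id_apply]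
  refine LinearMap.exact_of_comp_of_mem_range ?_ fun x hx => ?_
  · rw [← map₂_comp, h.linearMap_comp_eq_zero, map₂_zero]
  · obtain ⟨w, hw⟩ := (exact_map₂_finsupp M h (map₁ B N' s x)).1 (by rw [map₂_map₁, hx, map_zero])
    exact ⟨map₁ B N (Finsupp.linearCombination Bᵐᵒᵖ id) w, by rw [map₂_map₁, hw, hretract]⟩

theorem map₁_injective_of_projective (hN : Module.Projective B N) {g : M →ₗ[Bᵐᵒᵖ] M'}
    (hg : Injective g) : Injective (map₁ B N g) := by
  obtain ⟨s, hs⟩ := Module.projective_def'.mp hN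
  have hretract (x : BTensor B M N) :
      map₂ B M (Finsupp.linearCombination B id) (map₂ B M s x) = x := by
    rw [← LinearMap.comp_apply, ← map₂_comp, hs, map₂_id, LinearMap.id_apply]
  intro x y hxy
  rw [← hretract x, ← hretract y]
  congr 1
  apply map₁_injective_finsupp N hg
  rw [← map₂_map₁, ← map₂_map₁, hxy]

theorem bTrel_le_map_of_surjective {q : Q →ₗ[Bᵐᵒᵖ] M} (hq : Surjective q) :
    BTrel B M N ≤ (BTrel B Q N).map (LinearMap.rTensor N q.toAddMonoidHom.toIntLinearMap) := by
  refine Submodule.span_le.2 ?_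
  rintro _ ⟨m, b, n, rfl⟩
  obtain ⟨u, rfl⟩ := hq m
  refine ⟨(op b • u) ⊗ₜ n - u ⊗ₜ (b • n), Submodule.subset_span ⟨u, b, n, rfl⟩, ?_⟩
  simp

-- Reduces to right exactness of `- ⊗_ℤ N`, since the balancing relations of `M` lift along `q`.
theorem exact_map₁_ker_subtype {q : Q →ₗ[Bᵐᵒᵖ] M} (hq : Surjective q) :
    Exact (map₁ B N (LinearMap.ker q).subtype) (map₁ B N q) := by
  refine LinearMap.exact_of_comp_of_mem_range ?_ fun y hy => ?_
  · rw [← map₁_comp, LinearMap.comp_ker_subtype, map₁_zero]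
  · obtain ⟨yt, rfl⟩ := Submodule.Quotient.mk_surjective _ y
    obtain ⟨t, ht, hteq⟩ := bTrel_le_map_of_surjective hq ((Submodule.Quotient.mk_eq_zero _).1 hy)
    obtain ⟨z, hz⟩ := (rTensor_exact (f := (LinearMap.ker q).subtype.toAddMonoidHom.toIntLinearMap)
      (g := q.toAddMonoidHom.toIntLinearMap) N (LinearMap.exact_subtype_ker_map q) hq (yt - t)).1
      (by rw [map_sub, hteq]; exact sub_self _)
    refine ⟨Submodule.Quotient.mk z, (Submodule.Quotient.eq _).2 ?_⟩
    have hsub : TensorProduct.map (LinearMap.ker q).subtype.toAddMonoidHom.toIntLinearMap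
        LinearMap.id z - yt = -t := by
      rw [← LinearMap.rTensor, hz, sub_sub_cancel_left]
    exact hsub ▸ neg_mem ht

variable {N₁ N₂ N₃ N₄ : Type} [AddCommGroup N₁] [AddCommGroup N₂] [AddCommGroup N₃]
  [AddCommGroup N₄] [Module B N₁] [Module B N₂] [Module B N₃] [Module B N₄] in
theorem exact_map₂_of_exact_map₂_ker {q : Q →ₗ[Bᵐᵒᵖ] M} (hq : Surjective q)
    (hQ : Module.Projective Bᵐᵒᵖ Q) {d₁ : N₁ →ₗ[B] N₂} {d₂ : N₂ →ₗ[B] N₃} {d₃ : N₃ →ₗ[B] N₄}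
    (hN₄ : Module.Projective B N₄) (h₁₂ : Exact d₁ d₂) (h₂₃ : Exact d₂ d₃)
    (hK : Exact (map₂ B (LinearMap.ker q) d₂) (map₂ B (LinearMap.ker q) d₃)) :
    Exact (map₂ B M d₁) (map₂ B M d₂) := by
  set incl := (LinearMap.ker q).subtype
  refine LinearMap.exact_of_comp_of_mem_range
    (by rw [← map₂_comp, h₁₂.linearMap_comp_eq_zero, map₂_zero]) fun c hc => ?_
  obtain ⟨b, rfl⟩ := map₁_surjective hq c
  obtain ⟨a, ha⟩ : map₂ B Q d₂ b ∈ Set.range (map₁ B N₃ incl) :=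
    (exact_map₁_ker_subtype hq _).1 (by rw [← map₂_map₁, hc])
  obtain ⟨a', ha'⟩ : a ∈ Set.range (map₂ B _ d₂) := by
    refine (hK a).1 (map₁_injective_of_projective hN₄ (Submodule.injective_subtype _) ?_)
    rw [map_zero, ← map₂_map₁, ha, map₂_map₂_eq_zero h₂₃.linearMap_comp_eq_zero]
  obtain ⟨b', hb'⟩ : b - map₁ B N₂ incl a' ∈ Set.range (map₂ B Q d₁) :=
    (exact_map₂_of_projective hQ h₁₂ _).1 (by rw [map_sub, map₂_map₁, ha', ha, sub_self])
  refine ⟨map₁ B N₁ q b', ?_⟩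
  rw [map₂_map₁, hb', map_sub, map₁_map₁_eq_zero (LinearMap.comp_ker_subtype q), sub_zero]

theorem exact_map₂_of_pdLE (P : ℤ → ModuleCat.{0} B) (d : ∀ i, P i ⟶ P (i + 1))
    (hproj : ∀ i, Module.Projective B (P i)) (hex : ∀ i, Exact (d i).hom (d (i + 1)).hom) :
    ∀ (n : ℕ) (M : Type) [AddCommGroup M] [Module Bᵐᵒᵖ M], pdLE Bᵐᵒᵖ n (ModuleCat.of Bᵐᵒᵖ M) →
      ∀ i, Exact (map₂ B M (d i).hom) (map₂ B M (d (i + 1)).hom)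
  | 0, _, _, _, hM, i => exact_map₂_of_projective hM (hex i)
  | n + 1, _, _, _, ⟨_, _, hQ, hq, hK⟩, i =>
    exact_map₂_of_exact_map₂_ker hq hQ (hproj _) (hex i) (hex (i + 1))
      (exact_map₂_of_pdLE P d hproj hex n _ hK (i + 1))

section Projective

variable (Γ : Type) [Ring Γ] [Module Γ M] [SMulCommClass Γ Bᵐᵒᵖ M]

def map₂ₗ (f : N →ₗ[B] N') : BTensor B M N →ₗ[Γ] BTensor B M N' where
  toFun := map₂ B M f
  map_add' := map_add _
  map_smul' g := map₂_map₁ f (lsmulRightLinear B Γ M g)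

def finsuppScalarRightₗ (ι : Type) : BTensor B M (ι →₀ B) ≃ₗ[Γ] (ι →₀ M) :=
  (finsuppScalarRight ι).toLinearEquiv fun g =>
    finsuppScalarRight_map₁ ι (lsmulRightLinear B Γ M g)

theorem projective (hM : Module.Projective Γ M) (hN : Module.Projective B N) :
    Module.Projective Γ (BTensor B M N) := by
  classical
  obtain ⟨s, hs⟩ := Module.projective_def'.mp hN
  have : Module.Projective Γ (N →₀ M) := .of_equiv (finsuppLequivDFinsupp Γ).symm
  have : Module.Projective Γ (BTensor B M (N →₀ B)) := .of_equiv (finsuppScalarRightₗ Γ N).symm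
  refine .of_split (map₂ₗ Γ s) (map₂ₗ Γ (Finsupp.linearCombination B id))
    (LinearMap.ext fun x => ?_)
  change (map₂ B M _ ∘ₗ map₂ B M s) x = x
  rw [← map₂_comp, hs, map₂_id, LinearMap.id_apply]

end Projective

end BTensor

theorem statement10_general (Γ Λ : Type) [Ring Γ] [Ring Λ]
    (X : Type) [AddCommGroup X] [Module Γ X] [Module Λᵐᵒᵖ X] [SMulCommClass Γ Λᵐᵒᵖ X]
    (hXleft : Module.Projective Γ X) (hXright : HasFinProjDim Λᵐᵒᵖ X)
    (P : ℤ → ModuleCat.{0} Λ) (d : ∀ i, P i ⟶ P (i + 1))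
    (hproj : ∀ i, Module.Projective Λ (P i))
    (hex : ∀ i, LinearMap.range (d i).hom = LinearMap.ker (d (i + 1)).hom) :
    (∀ i, LinearMap.range (BTensor.map₂ Λ X (d i).hom) =
        LinearMap.ker (BTensor.map₂ Λ X (d (i + 1)).hom)) ∧
      ∀ i, Module.Projective Γ (BTensor Λ X (P i)) := by
  obtain ⟨n, hn⟩ := hXright
  have hexact i : Exact (d i).hom (d (i + 1)).hom := LinearMap.exact_iff.2 (hex i).symm
  refine ⟨fun i => ?_, fun i => BTensor.projective Γ hXleft (hproj i)⟩
  exact (LinearMap.exact_iff.1 (BTensor.exact_map₂_of_pdLE P d hproj hexact n X hn i)).symm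

/-- Let `X` be a `Γ`-`Λ`-bimodule, projective as a left `Γ`-module and of
finite projective dimension as a right `Λ`-module.  If `P⬝` is an exact complex of projective
left `Λ`-modules then `X ⊗_Λ P⬝` is exact and all its terms are projective left `Γ`-modules. -/
theorem statement10 (k : Type) [Field k] (Γ Λ : Type) [Ring Γ] [Ring Λ] [Algebra k Γ] [Algebra k Λ]
    [FiniteDimensional k Γ] [FiniteDimensional k Λ]
    (X : Type) [AddCommGroup X] [Module Γ X] [Module Λᵐᵒᵖ X] [SMulCommClass Γ Λᵐᵒᵖ X]
    (hXleft : Module.Projective Γ X) (hXright : HasFinProjDim Λᵐᵒᵖ X)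
    (P : ℤ → ModuleCat.{0} Λ) (d : ∀ i, P i ⟶ P (i + 1))
    (hproj : ∀ i, Module.Projective Λ (P i))
    (hex : ∀ i, LinearMap.range (d i).hom = LinearMap.ker (d (i + 1)).hom) :
    (∀ i, LinearMap.range (BTensor.map₂ Λ X (d i).hom) =
        LinearMap.ker (BTensor.map₂ Λ X (d (i + 1)).hom)) ∧
      ∀ i, Module.Projective Γ (BTensor Λ X (P i)) :=
  statement10_general Γ Λ X hXleft hXright P d hproj hex
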